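/- arXiv:math/0608790 — 2 statements merged into one kernel-verified Lean document; each statement's English description precedes it below -/
import Mathlib

section
/- Let E be a finite nonempty set, K a finite set of keys with |K| = |E|, each key k acting as a bijection of E, used with uniform probability 1/|K|, and assume that for every pair (x, y) ∈ E × E there is exactly one key k with k(x) = y. Then for any probability distribution on plaintexts E, the ciphertext distribution is uniform on E, and the conditional probability of any plaintext x given any ciphertext y equals the prior probability of x (perfect secrecy). -/
/-! For each plaintext `x` exactly one key sends `x` to a given ciphertext `y`, so
`P(P = x, C = y) = p x / |K|`, and summing over `x` gives `P(C = y) = 1 / |K|`.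
The latin property also makes `k ↦ k x` a bijection `K ≃ E`, whence `|K| = |E|`. -/

open Finset

section LatinCipher

variable {E K : Type*} [Fintype K]

lemma Fintype.sum_ite_of_existsUnique {M : Type*} [AddCommMonoid M] {P : K → Prop}
    [DecidablePred P] (h : ∃! k, P k) (c : M) :
    ∑ k, (if P k then c else 0) = c := by
  obtain ⟨k₀, hk₀, huniq⟩ := h
  rw [Fintype.sum_eq_single k₀ fun k hk => if_neg (mt (huniq k) hk), if_pos hk₀]

lemma card_eq_of_latin [Fintype E] {act : K → E → E}
    (hlatin : ∀ x y : E, ∃! k : K, act k x = y) (x : E) :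
    Fintype.card K = Fintype.card E :=
  Fintype.card_of_bijective ((Function.bijective_iff_existsUnique fun k => act k x).2 (hlatin x))

variable [DecidableEq E]

/-- `P(P = x, C = y)` for plaintext distribution `p` and a uniformly random key. -/
noncomputable def jointProb (act : K → E → E) (p : E → ℝ) (x y : E) : ℝ :=
  ∑ k, if act k x = y then (1 / (Fintype.card K : ℝ)) * p x else 0

/-- `P(C = y)` for plaintext distribution `p` and a uniformly random key. -/
noncomputable def cipherProb [Fintype E] (act : K → E → E) (p : E → ℝ) (y : E) : ℝ :=
  ∑ k, ∑ x, if act k x = y then (1 / (Fintype.card K : ℝ)) * p x else 0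

variable {act : K → E → E}

lemma jointProb_of_latin (hlatin : ∀ x y : E, ∃! k : K, act k x = y) (p : E → ℝ) (x y : E) :
    jointProb act p x y = p x / Fintype.card K := by
  rw [jointProb, Fintype.sum_ite_of_existsUnique (hlatin x y), one_div_mul_eq_div]

lemma cipherProb_of_latin [Fintype E] (hlatin : ∀ x y : E, ∃! k : K, act k x = y)
    (p : E → ℝ) (y : E) :
    cipherProb act p y = (∑ x, p x) / Fintype.card K := by
  rw [cipherProb, sum_comm, sum_div]
  exact sum_congr rfl fun x _ => jointProb_of_latin hlatin p x y

end LatinCipher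

theorem latin_square_perfect_secrecy_general
    (E K : Type*) [Fintype E] [Fintype K] [DecidableEq E]
    (act : K → Equiv.Perm E)
    (hlatin : ∀ x y : E, ∃! k : K, act k x = y)
    (p : E → ℝ) (hp1 : ∑ x, p x = 1) :
    (∀ y : E,
      (∑ k : K, ∑ x : E, if act k x = y then (1 / (Fintype.card K : ℝ)) * p x else 0)
        = 1 / (Fintype.card E : ℝ)) ∧
    (∀ x y : E,
      (∑ k : K, if act k x = y then (1 / (Fintype.card K : ℝ)) * p x else 0) /
      (∑ k : K, ∑ x' : E, if act k x' = y then (1 / (Fintype.card K : ℝ)) * p x' else 0)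
        = p x) := by
  have hcipher (y : E) : cipherProb (fun k => act k) p y = 1 / Fintype.card E := by
    rw [cipherProb_of_latin hlatin, hp1, card_eq_of_latin hlatin y]
  refine ⟨hcipher, fun x y => ?_⟩
  have hK : (Fintype.card K : ℝ) ≠ 0 := by
    have : Nonempty K := (hlatin x y).exists.nonempty
    positivity
  change jointProb (fun k => act k) p x y / cipherProb (fun k => act k) p y = p x
  rw [jointProb_of_latin hlatin, cipherProb_of_latin hlatin, hp1]
  field_simp

/-- Shannon's theorem, latin-square case. Let `E` be a finite nonempty set of
plaintexts/ciphertexts, `K` a finite set of keys acting as bijections of `E`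
with `|K| = |E|`, each key used with uniform probability `1/|K|`, and suppose
that for every `(x, y)` there is exactly one key carrying `x` to `y`.
Then for every plaintext distribution `p` the ciphertext distribution is
uniform on `E`, and the conditional probability of any plaintext `x` given any
ciphertext `y` equals the prior `p x` (perfect secrecy). -/
theorem latin_square_perfect_secrecy
    (E K : Type*) [Fintype E] [Fintype K] [Nonempty E] [DecidableEq E]
    (act : K → Equiv.Perm E)
    (hcard : Fintype.card K = Fintype.card E)
    (hlatin : ∀ x y : E, ∃! k : K, act k x = y)
    (p : E → ℝ) (hp0 : ∀ x, 0 ≤ p x) (hp1 : ∑ x, p x = 1) :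
    (∀ y : E,
      (∑ k : K, ∑ x : E, if act k x = y then (1 / (Fintype.card K : ℝ)) * p x else 0)
        = 1 / (Fintype.card E : ℝ)) ∧
    (∀ x y : E,
      (∑ k : K, if act k x = y then (1 / (Fintype.card K : ℝ)) * p x else 0) /
      (∑ k : K, ∑ x' : E, if act k x' = y then (1 / (Fintype.card K : ℝ)) * p x' else 0)
        = p x) :=
  latin_square_perfect_secrecy_general E K act hlatin p hp1
end

section
/- Suppose along a path (i_1,...,i_n) there is perfect secrecy and the final ciphertext probability p_{C} is positive for every ciphertext C. Then for every choice of plaintexts P_{i_1} ∈ E_{i_1}, ..., P_{i_{n−1}} ∈ E_{i_{n−1}} and every ciphertext C, there exist keys u_{i_2 i_1}, ..., u_{i_n i_{n−1}} at each node carrying P_{i_p} to P_{i_{p+1}} (and P_{i_{n−1}} to C). Consequently, the number of keys available at each node is at least |E|, the common cardinality of the plaintext sets. -/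
/-! Under perfect secrecy, the probability of reaching `C` from any tuple of plaintexts equals the
total probability of `C`, which is positive; as this probability is the product over the links of
the weight of the keys carrying each plaintext to the next one, every factor is nonzero, so at every
link some key does the job. Taking the plaintexts before link `p` arbitrary and all later ones, as
well as `C`, equal to a given `y`, the keys at `p` map a fixed plaintext onto every `y`, whence at
least `|E|` keys. -/

open Finset

theorem exists_of_sum_ite_ne_zero {ι M : Type*} [AddCommMonoid M] {s : Finset ι}
    {P : ι → Prop} [DecidablePred P] {f : ι → M}
    (h : ∑ i ∈ s, (if P i then f i else 0) ≠ 0) :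
    ∃ i ∈ s, P i := by
  obtain ⟨i, hi, hne⟩ := exists_ne_zero_of_sum_ne_zero h
  exact ⟨i, hi, by_contra fun hP => hne (if_neg hP)⟩

theorem card_le_card_of_forall_exists_apply_eq {K E : Type*} [Fintype K] [Fintype E]
    (f : K → E → E) (h : ∀ x y, ∃ k, f k x = y) : Fintype.card E ≤ Fintype.card K := by
  cases isEmpty_or_nonempty E with
  | inl _ => simp
  | inr hE => exact Fintype.card_le_of_surjective (f · hE.some) (h hE.some)

/-- The plaintext following the one at link `p` of a path of `m` links: the next entry of `xs`,
or the ciphertext `C` after the last link. -/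
def pathSucc {m : ℕ} {E : Type*} (xs : Fin m → E) (C : E) (p : Fin m) : E :=
  if h : (p : ℕ) + 1 < m then xs ⟨p + 1, h⟩ else C

theorem pathSucc_update_const {m : ℕ} {E : Type*} [DecidableEq E] (p : Fin m) (x y : E) :
    pathSucc (Function.update (fun _ => y) p x) y p = y := by
  unfold pathSucc
  split_ifs with h
  · exact Function.update_of_ne (by simp [Fin.ext_iff]) _ _
  · rfl

theorem perfect_secrecy_key_existence_general
    (m : ℕ) (E : Type*) [Fintype E] [DecidableEq E]
    (K : ℕ → Type*) [∀ p, Fintype (K p)]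
    (pl : ℕ → E → ℝ) (d : ∀ p, K p → ℝ)
    (act : ∀ p, K p → Equiv.Perm E)
    -- perfect secrecy of the path:  P(C | tuple) = P(C) for every tuple and `C`
    (hsecrecy : ∀ (xs : Fin m → E) (C : E),
      (∏ p : Fin m, ∑ k, if act p k (xs p) =
          (if h : (p : ℕ) + 1 < m then xs ⟨p + 1, h⟩ else C) then d p k else 0)
      = ∑ ys : Fin m → E, (∏ p : Fin m, pl p (ys p)) *
          ∏ p : Fin m, ∑ k, if act p k (ys p) =
            (if h : (p : ℕ) + 1 < m then ys ⟨p + 1, h⟩ else C) then d p k else 0)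
    -- every ciphertext has positive probability
    (hpos : ∀ C : E,
      0 < ∑ ys : Fin m → E, (∏ p : Fin m, pl p (ys p)) *
            ∏ p : Fin m, ∑ k, if act p k (ys p) =
              (if h : (p : ℕ) + 1 < m then ys ⟨p + 1, h⟩ else C) then d p k else 0) :
    (∀ (xs : Fin m → E) (C : E), ∀ p : Fin m, ∃ k : K p,
        act p k (xs p) = (if h : (p : ℕ) + 1 < m then xs ⟨p + 1, h⟩ else C)) ∧
    (∀ p : Fin m, Fintype.card E ≤ Fintype.card (K p)) := by
  have key : ∀ (xs : Fin m → E) (C : E) (p : Fin m),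
      ∃ k : K p, act p k (xs p) = pathSucc xs C p := by
    intro xs C p
    have hprod := (hsecrecy xs C).symm ▸ hpos C
    have hfactor := prod_ne_zero_iff.mp hprod.ne' p (mem_univ p)
    obtain ⟨k, -, hk⟩ := exists_of_sum_ite_ne_zero hfactor
    exact ⟨k, hk⟩
  refine ⟨key, fun p => card_le_card_of_forall_exists_apply_eq (fun k => act p k) fun x y => ?_⟩
  simpa [pathSucc_update_const] using key (Function.update (fun _ => y) p x) y p

/-- If a path of `m` encryption links has perfect secrecy (the probability of the
final ciphertext `C` given any tuple of intermediate plaintexts equals the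
unconditional probability of `C`) and every ciphertext has positive probability,
then for every choice of plaintexts `xs : Fin m → E` and every ciphertext `C`
there exist keys at each node carrying each plaintext to the next one (and the
last plaintext to `C`); consequently the number of keys available at each node
is at least `|E|`, the common cardinality of the plaintext sets. -/
theorem perfect_secrecy_key_existence
    (m : ℕ) (hm : 1 ≤ m) (E : Type*) [Fintype E] [DecidableEq E] [Nonempty E]
    (K : ℕ → Type*) [∀ p, Fintype (K p)]
    (pl : ℕ → E → ℝ) (d : ∀ p, K p → ℝ)
    (hpl0 : ∀ p x, 0 ≤ pl p x) (hpl1 : ∀ p, ∑ x, pl p x = 1)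
    (hd0 : ∀ p k, 0 ≤ d p k) (hd1 : ∀ p, ∑ k, d p k = 1)
    (act : ∀ p, K p → Equiv.Perm E)
    -- perfect secrecy of the path:  P(C | tuple) = P(C) for every tuple and `C`
    (hsecrecy : ∀ (xs : Fin m → E) (C : E),
      (∏ p : Fin m, ∑ k, if act p k (xs p) =
          (if h : (p : ℕ) + 1 < m then xs ⟨p + 1, h⟩ else C) then d p k else 0)
      = ∑ ys : Fin m → E, (∏ p : Fin m, pl p (ys p)) *
          ∏ p : Fin m, ∑ k, if act p k (ys p) =
            (if h : (p : ℕ) + 1 < m then ys ⟨p + 1, h⟩ else C) then d p k else 0)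
    -- every ciphertext has positive probability
    (hpos : ∀ C : E,
      0 < ∑ ys : Fin m → E, (∏ p : Fin m, pl p (ys p)) *
            ∏ p : Fin m, ∑ k, if act p k (ys p) =
              (if h : (p : ℕ) + 1 < m then ys ⟨p + 1, h⟩ else C) then d p k else 0) :
    (∀ (xs : Fin m → E) (C : E), ∀ p : Fin m, ∃ k : K p,
        act p k (xs p) = (if h : (p : ℕ) + 1 < m then xs ⟨p + 1, h⟩ else C)) ∧
    (∀ p : Fin m, Fintype.card E ≤ Fintype.card (K p)) :=
  perfect_secrecy_key_existence_general m E K pl d act hsecrecy hpos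
end
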